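/- arXiv:2203.03766 — 2 statements merged into one kernel-verified Lean document; each statement's English description precedes it below -/
import Mathlib

section
/- For every θ ∈ (0,1) there exist constants C = C(θ) > 0 and δ₀ = δ₀(θ) > 0 with the following property: if 0 < δ ≤ δ₀ and (I, ψ, m) satisfy the centering condition m((-∞, a_θ] ∩ I) = θ and the δ-deficit condition e^{-ψ(a_θ)} ≤ e^{-ψ_g(a_θ)} + δ, then the relative entropy of m with respect to γ satisfies Ent_γ(m) = ∫_I (ψ_g(x) − ψ(x)) e^{ψ_g(x) − ψ(x)} γ(dx) ≤ C · δ. -/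
/-!
Write `u = ψ - ψ_g`, so that `m = e^{-u} γ` on `I` and `Ent_γ(m) = ∫_I (-u) e^{-u} dγ`.
One-convexity of `ψ` says exactly that `u` is convex, so `u` lies above a supporting line
`u a + s (x - a)` at the quantile `a = a_θ`. This gives
`Ent_γ(m) ≤ -u a - s ∫_I (x - a) dm`, and the deficit condition gives `-u a ≤ e^{ψ_g a} δ`.

It remains to see that `s = O(δ)`. On `I` the measure `m` is dominated by the tilted Gaussian
`e^{-u a - s (x - a)} γ`, and like `γ`, `m` gives mass `θ` to `(-∞, a]` and `1 - θ` to `(a, ∞)`.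
On the side towards which the tilt `e^{-s (x - a)}` decays, the tilted Gaussian has lost at least
the fraction `1 - e^{-|s|}` of the Gaussian mass beyond `a ± 1`, which the factor
`e^{-u a} ≤ 1 + O(δ)` can make up only if `|s| = O(δ)`. Once `|s| ≤ 1`, the first moment of `m`
about `a` is bounded by a Gaussian moment depending on `a` only.
-/

open MeasureTheory Real Set

/-- `gaussPsi x = x²/2 + (1/2)·log(2π)`, so that the standard Gaussian measure
is `exp (-gaussPsi x) dx`. -/
noncomputable def gaussPsi (x : ℝ) : ℝ := x ^ 2 / 2 + Real.log (2 * π) / 2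

/-- The standard Gaussian measure `γ(dx) = (2π)^{-1/2} exp(-x²/2) dx` on `ℝ`. -/
noncomputable def gauss : Measure ℝ :=
  MeasureTheory.volume.withDensity fun x => ENNReal.ofReal (Real.exp (-gaussPsi x))

open ProbabilityTheory

@[fun_prop]
lemma continuous_gaussPsi : Continuous gaussPsi := by
  unfold gaussPsi
  fun_prop

lemma gauss_eq_gaussianReal : gauss = gaussianReal 0 1 := by
  rw [gaussianReal_of_var_ne_zero _ one_ne_zero, gauss]
  congr with x
  have hsqrt : √(2 * π) = exp (log (2 * π) / 2) := by
    rw [sqrt_eq_rpow, rpow_def_of_pos (by positivity), mul_one_div]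
  rw [gaussianPDF, gaussianPDFReal, NNReal.coe_one, mul_one, hsqrt, ← exp_neg, ← exp_add,
    gaussPsi]
  ring_nf

instance isProbabilityMeasure_gauss : IsProbabilityMeasure gauss :=
  gauss_eq_gaussianReal ▸ inferInstance

lemma integrable_exp_mul_gauss (t : ℝ) : Integrable (fun x => exp (t * x)) gauss :=
  gauss_eq_gaussianReal ▸ integrable_exp_mul_gaussianReal t

lemma measureReal_gauss_pos {S : Set ℝ} (hS : volume S ≠ 0) : 0 < gauss.real S := by
  refine measureReal_nonneg.lt_of_ne' fun h => hS ?_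
  rw [measureReal_eq_zero_iff] at h
  exact (gauss_eq_gaussianReal ▸ gaussianReal_absolutelyContinuous' 0 one_ne_zero) h

lemma strictMono_measureReal_gauss_Iic : StrictMono fun b => gauss.real (Iic b) := by
  intro b c hbc
  dsimp only
  rw [← Iic_union_Ioc_eq_Iic hbc.le, measureReal_union (Iic_disjoint_Ioc le_rfl) measurableSet_Ioc]
  simpa using measureReal_gauss_pos (by simpa using hbc)

lemma gauss_Iic_injective : Function.Injective fun b => gauss (Iic b) := fun _ _ h =>
  strictMono_measureReal_gauss_Iic.injective (congrArg ENNReal.toReal h)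

lemma strongConvexOn_of_forall_mem_Ioo {S : Set ℝ} {f : ℝ → ℝ} {m : ℝ} (hS : Convex ℝ S)
    (hf : ∀ x ∈ S, ∀ y ∈ S, ∀ t ∈ Ioo (0:ℝ) 1,
      f ((1 - t) * x + t * y) ≤ (1 - t) * f x + t * f y - m / 2 * (1 - t) * t * |x - y| ^ 2) :
    StrongConvexOn S m f := by
  refine ⟨hS, fun x hx y hy p q hp hq hpq => ?_⟩
  obtain rfl : p = 1 - q := by linarith
  rcases hq.eq_or_lt with rfl | hq
  · simp
  rcases hp.eq_or_lt with hp | hp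
  · obtain rfl : q = 1 := by linarith
    simp
  simpa [Real.norm_eq_abs, mul_assoc, mul_left_comm] using hf x hx y hy q ⟨hq, by linarith⟩

lemma StrongConvexOn.convexOn_sub_gaussPsi {S : Set ℝ} {f : ℝ → ℝ} (hf : StrongConvexOn S 1 f) :
    ConvexOn ℝ S fun x => f x - gaussPsi x := by
  refine ((strongConvexOn_iff_convex.1 hf).add_const (-(log (2 * π) / 2))).congr fun x _ => ?_
  simp only [Pi.add_apply, gaussPsi, Real.norm_eq_abs, sq_abs]
  ring

lemma ConvexOn.add_rightDeriv_mul_sub_le {S : Set ℝ} {f : ℝ → ℝ} {a x : ℝ} (hf : ConvexOn ℝ S f)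
    (ha : a ∈ interior S) (hx : x ∈ S) : f a + derivWithin f (Ioi a) a * (x - a) ≤ f x := by
  rcases lt_trichotomy x a with hxa | rfl | hax
  · have h := (hf.slope_le_leftDeriv_of_mem_interior hx ha hxa).trans
      (hf.leftDeriv_le_rightDeriv_of_mem_interior ha)
    rw [slope_def_field, div_le_iff₀ (sub_pos.2 hxa)] at h
    linarith
  · simp
  · have h := hf.rightDeriv_le_slope_of_mem_interior ha hx hax
    rw [slope_def_field, le_div_iff₀ (sub_pos.2 hax)] at h
    linarith

lemma setIntegral_le_measureReal_sub_mul {μ : Measure ℝ} [IsFiniteMeasure μ] {S T : Set ℝ}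
    {g : ℝ → ℝ} {q : ℝ} (hS : MeasurableSet S) (hT : MeasurableSet T) (hTS : T ⊆ S)
    (hg : IntegrableOn g S μ) (hg1 : ∀ x ∈ S, g x ≤ 1) (hgq : ∀ x ∈ T, g x ≤ q) :
    ∫ x in S, g x ∂μ ≤ μ.real S - (1 - q) * μ.real T := by
  have hgap : IntegrableOn (fun x => 1 - g x) S μ := (integrableOn_const ..).sub hg
  have hT_le : (1 - q) * μ.real T ≤ ∫ x in T, (1 - g x) ∂μ := by
    rw [mul_comm, ← smul_eq_mul, ← setIntegral_const]
    exact setIntegral_mono_on (integrableOn_const ..) (hgap.mono_set hTS) hT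
      fun x hx => by linarith [hgq x hx]
  have hS_ge : ∫ x in T, (1 - g x) ∂μ ≤ ∫ x in S, (1 - g x) ∂μ :=
    setIntegral_mono_set hgap ((ae_restrict_iff' hS).2 (ae_of_all _ fun x hx =>
      sub_nonneg.2 (hg1 x hx))) (ae_of_all _ hTS)
  rw [integral_sub (integrable_const 1) hg, setIntegral_const, smul_eq_mul, mul_one] at hS_ge
  linarith

lemma one_sub_mul_le_of_le_mul {m R E η q K : ℝ} (hm0 : 0 ≤ m) (hm1 : m ≤ 1) (hmR : m ≤ E * R)
    (hR : R ≤ m - (1 - q) * K) (hE0 : 0 < E) (hE : E ≤ 1 + η) (hη : 0 ≤ η) :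
    (1 - q) * K ≤ η := by
  have hEG : E * ((1 - q) * K) ≤ (E - 1) * m := by nlinarith
  rcases le_total 1 E with h1 | h1
  · nlinarith
  · nlinarith

lemma le_of_one_sub_exp_neg_mul_le {t κ η : ℝ} (ht : 0 ≤ t) (hκ : 0 < κ)
    (h : (1 - exp (-t)) * κ ≤ η) (hηκ : η ≤ κ / 2) : t ≤ 2 * η / κ := by
  have hexp : (1 + t) * exp (-t) ≤ 1 :=
    calc (1 + t) * exp (-t) ≤ exp t * exp (-t) := by gcongr; linarith [add_one_le_exp t]
      _ = 1 := by rw [← exp_add, add_neg_cancel, exp_zero]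
  rw [le_div_iff₀ hκ]
  nlinarith [exp_pos (-t)]

lemma integrable_exp_mul_sub {μ : Measure ℝ} (hexp : ∀ t, Integrable (fun x => exp (t * x)) μ)
    (t a : ℝ) : Integrable (fun x => exp (t * (x - a))) μ := by
  simpa [mul_sub, exp_sub, div_eq_mul_inv] using (hexp t).mul_const (exp (t * a))⁻¹

lemma integrable_abs_sub_mul_exp_abs_sub {μ : Measure ℝ}
    (hexp : ∀ t, Integrable (fun x => exp (t * x)) μ) (a : ℝ) :
    Integrable (fun x => |x - a| * exp |x - a|) μ := by
  simpa using integrable_pow_abs_mul_exp_add_of_integrable_exp_mul (X := fun x => x - a) (v := 0)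
    (t := 2) (by simpa using integrable_exp_mul_sub hexp 2 a)
    (by simpa using integrable_exp_mul_sub hexp (-2) a) zero_le_one (by norm_num) 1

section Subgradient

variable {μ : Measure ℝ} {I : Set ℝ} {u : ℝ → ℝ} {a s : ℝ}

lemma exp_neg_le_of_subgradient (hs : ∀ x ∈ I, u a + s * (x - a) ≤ u x) {x : ℝ} (hx : x ∈ I) :
    exp (-u x) ≤ exp (-u a) * exp (-s * (x - a)) := by
  rw [← exp_add]
  exact exp_le_exp.2 (by linarith [hs x hx])

lemma neg_mul_exp_neg_le_of_subgradient (hs : ∀ x ∈ I, u a + s * (x - a) ≤ u x) {x : ℝ}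
    (hx : x ∈ I) : -u x * exp (-u x) ≤ (-u a - s * (x - a)) * exp (-u x) :=
  mul_le_mul_of_nonneg_right (by linarith [hs x hx]) (exp_pos _).le

lemma abs_sub_mul_exp_neg_le (hs : ∀ x ∈ I, u a + s * (x - a) ≤ u x) (hs1 : |s| ≤ 1) {x : ℝ}
    (hx : x ∈ I) : |(x - a) * exp (-u x)| ≤ exp (-u a) * (|x - a| * exp |x - a|) := by
  have htilt : -s * (x - a) ≤ |x - a| :=
    calc -s * (x - a) ≤ |s| * |x - a| := by rw [← abs_neg s, ← abs_mul]; exact le_abs_self _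
      _ ≤ |x - a| := mul_le_of_le_one_left (abs_nonneg _) hs1
  rw [abs_mul, abs_of_pos (exp_pos _)]
  calc |x - a| * exp (-u x) ≤ |x - a| * (exp (-u a) * exp (-s * (x - a))) := by
        gcongr; exact exp_neg_le_of_subgradient hs hx
    _ ≤ |x - a| * (exp (-u a) * exp |x - a|) := by gcongr
    _ = exp (-u a) * (|x - a| * exp |x - a|) := by ring

variable (hexp : ∀ t, Integrable (fun x => exp (t * x)) μ) (hI : MeasurableSet I)
  (hu : AEStronglyMeasurable u (μ.restrict I)) (hs : ∀ x ∈ I, u a + s * (x - a) ≤ u x)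
include hexp hI hu hs

lemma integrableOn_exp_neg_of_subgradient : IntegrableOn (fun x => exp (-u x)) I μ :=
  Integrable.mono' ((integrable_exp_mul_sub hexp (-s) a).const_mul (exp (-u a))).integrableOn
    (continuous_exp.comp_aestronglyMeasurable hu.neg)
    ((ae_restrict_iff' hI).2 (ae_of_all _ fun x hx => by
      rw [norm_of_nonneg (exp_pos _).le]; exact exp_neg_le_of_subgradient hs hx))

lemma integrableOn_sub_mul_exp_neg (hs1 : |s| ≤ 1) :
    IntegrableOn (fun x => (x - a) * exp (-u x)) I μ :=
  Integrable.mono' ((integrable_abs_sub_mul_exp_abs_sub hexp a).const_mul _).integrableOn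
    ((continuous_sub_right a).aestronglyMeasurable.mul
      (continuous_exp.comp_aestronglyMeasurable hu.neg))
    ((ae_restrict_iff' hI).2 (ae_of_all _ fun _ hx => abs_sub_mul_exp_neg_le hs hs1 hx))

lemma integrableOn_affine_mul_exp_neg (hs1 : |s| ≤ 1) :
    IntegrableOn (fun x => (-u a - s * (x - a)) * exp (-u x)) I μ := by
  refine (((integrableOn_exp_neg_of_subgradient hexp hI hu hs).const_mul (-u a)).sub
    ((integrableOn_sub_mul_exp_neg hexp hI hu hs hs1).const_mul s)).congr
    (ae_of_all _ fun x => ?_)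
  simp only [Pi.sub_apply]
  ring

lemma integrableOn_neg_mul_exp_neg [IsFiniteMeasure μ] (hs1 : |s| ≤ 1) :
    IntegrableOn (fun x => -u x * exp (-u x)) I μ :=
  integrable_of_le_of_le (hu.neg.mul (continuous_exp.comp_aestronglyMeasurable hu.neg))
    (ae_of_all _ fun x => by
      linarith [mul_exp_neg_le_exp_neg_one (u x), neg_mul (u x) (exp (-u x))])
    ((ae_restrict_iff' hI).2 (ae_of_all _ fun _ hx => neg_mul_exp_neg_le_of_subgradient hs hx))
    (integrable_const (-exp (-1))) (integrableOn_affine_mul_exp_neg hexp hI hu hs hs1)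

lemma setIntegral_inter_exp_neg_le {S : Set ℝ} (hS : MeasurableSet S) :
    ∫ x in S ∩ I, exp (-u x) ∂μ ≤ exp (-u a) * ∫ x in S, exp (-s * (x - a)) ∂μ := by
  have htilt := (integrable_exp_mul_sub hexp (-s) a).const_mul (exp (-u a))
  rw [← integral_const_mul]
  calc ∫ x in S ∩ I, exp (-u x) ∂μ ≤ ∫ x in S ∩ I, exp (-u a) * exp (-s * (x - a)) ∂μ :=
        setIntegral_mono_on ((integrableOn_exp_neg_of_subgradient hexp hI hu hs).mono_set
          inter_subset_right) htilt.integrableOn (hS.inter hI)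
          fun x hx => exp_neg_le_of_subgradient hs hx.2
    _ ≤ ∫ x in S, exp (-u a) * exp (-s * (x - a)) ∂μ :=
        setIntegral_mono_set htilt.integrableOn (ae_of_all _ fun x => by positivity)
          (ae_of_all _ inter_subset_left)

lemma setIntegral_Ioi_inter_exp_neg [IsProbabilityMeasure μ]
    (hmass : ∫ x in I, exp (-u x) ∂μ = 1)
    (hleft : ∫ x in Iic a ∩ I, exp (-u x) ∂μ = μ.real (Iic a)) :
    ∫ x in Ioi a ∩ I, exp (-u x) ∂μ = μ.real (Ioi a) := by
  have hf := integrableOn_exp_neg_of_subgradient hexp hI hu hs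
  have hsplit := setIntegral_union ((Iic_disjoint_Ioi (le_refl a)).mono inter_subset_left
    inter_subset_left) (measurableSet_Ioi.inter hI) (hf.mono_set inter_subset_right)
    (hf.mono_set inter_subset_right)
  rw [← union_inter_distrib_right, Iic_union_Ioi, univ_inter, hmass, hleft] at hsplit
  have hcompl : μ.real (Ioi a) = 1 - μ.real (Iic a) := by
    rw [← compl_Iic, probReal_compl_eq_one_sub measurableSet_Iic]
  linarith

lemma one_sub_mul_measureReal_le [IsProbabilityMeasure μ] {S T : Set ℝ} {q η : ℝ}
    (hS : MeasurableSet S) (hT : MeasurableSet T) (hTS : T ⊆ S)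
    (hg1 : ∀ x ∈ S, exp (-s * (x - a)) ≤ 1) (hgq : ∀ x ∈ T, exp (-s * (x - a)) ≤ q)
    (hmassS : ∫ x in S ∩ I, exp (-u x) ∂μ = μ.real S) (hη : 0 ≤ η)
    (hua : exp (-u a) ≤ 1 + η) : (1 - q) * μ.real T ≤ η :=
  one_sub_mul_le_of_le_mul measureReal_nonneg measureReal_le_one
    (hmassS ▸ setIntegral_inter_exp_neg_le hexp hI hu hs hS)
    (setIntegral_le_measureReal_sub_mul hS hT hTS
      (integrable_exp_mul_sub hexp (-s) a).integrableOn hg1 hgq)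
    (exp_pos _) hua hη

lemma abs_subgradient_le [IsProbabilityMeasure μ] {η κ : ℝ}
    (hmass : ∫ x in I, exp (-u x) ∂μ = 1)
    (hleft : ∫ x in Iic a ∩ I, exp (-u x) ∂μ = μ.real (Iic a)) (hη : 0 ≤ η)
    (hua : exp (-u a) ≤ 1 + η) (hκ : 0 < κ) (hκl : κ ≤ μ.real (Iic (a - 1)))
    (hκr : κ ≤ μ.real (Ioi (a + 1))) (hηκ : η ≤ κ / 2) : |s| ≤ 2 * η / κ := by
  rcases le_total 0 s with hs0 | hs0
  · have h := one_sub_mul_measureReal_le hexp hI hu hs measurableSet_Ioi measurableSet_Ioi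
      (Ioi_subset_Ioi (by linarith)) (q := exp (-s))
      (fun x (hx : a < x) => exp_le_one_iff.2 (by nlinarith))
      (fun x (hx : a + 1 < x) => exp_le_exp.2 (by nlinarith))
      (setIntegral_Ioi_inter_exp_neg hexp hI hu hs hmass hleft) hη hua
    rw [abs_of_nonneg hs0]
    refine le_of_one_sub_exp_neg_mul_le hs0 hκ ((mul_le_mul_of_nonneg_left hκr ?_).trans h) hηκ
    linarith [exp_le_one_iff.2 (neg_nonpos.2 hs0)]
  · have h := one_sub_mul_measureReal_le hexp hI hu hs measurableSet_Iic measurableSet_Iic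
      (Iic_subset_Iic.2 (by linarith)) (q := exp s)
      (fun x (hx : x ≤ a) => exp_le_one_iff.2 (by nlinarith))
      (fun x (hx : x ≤ a - 1) => exp_le_exp.2 (by nlinarith)) hleft hη hua
    rw [abs_of_nonpos hs0]
    refine le_of_one_sub_exp_neg_mul_le (neg_nonneg.2 hs0) hκ ?_ hηκ
    rw [neg_neg]
    exact (mul_le_mul_of_nonneg_left hκl (by linarith [exp_le_one_iff.2 hs0])).trans h

omit hu in
lemma abs_setIntegral_sub_mul_exp_neg_le (hs1 : |s| ≤ 1) :
    |∫ x in I, (x - a) * exp (-u x) ∂μ| ≤ exp (-u a) * ∫ x, |x - a| * exp |x - a| ∂μ := by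
  have hD := (integrable_abs_sub_mul_exp_abs_sub hexp a).const_mul (exp (-u a))
  rw [← integral_const_mul]
  calc |∫ x in I, (x - a) * exp (-u x) ∂μ|
      ≤ ∫ x in I, exp (-u a) * (|x - a| * exp |x - a|) ∂μ :=
        (Real.norm_eq_abs _).symm.trans_le <|
          norm_integral_le_of_norm_le (f := fun x => (x - a) * exp (-u x)) hD.integrableOn
            ((ae_restrict_iff' hI).2 (ae_of_all _ fun x hx => abs_sub_mul_exp_neg_le hs hs1 hx))
    _ ≤ ∫ x, exp (-u a) * (|x - a| * exp |x - a|) ∂μ :=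
        setIntegral_le_integral hD (ae_of_all _ fun _ => by positivity)

theorem setIntegral_neg_mul_exp_neg_le_of_subgradient [IsProbabilityMeasure μ] {η κ : ℝ}
    (hmass : ∫ x in I, exp (-u x) ∂μ = 1)
    (hleft : ∫ x in Iic a ∩ I, exp (-u x) ∂μ = μ.real (Iic a)) (hη : 0 ≤ η)
    (hua : exp (-u a) ≤ 1 + η) (hκ : 0 < κ) (hκl : κ ≤ μ.real (Iic (a - 1)))
    (hκr : κ ≤ μ.real (Ioi (a + 1))) (hηκ : η ≤ κ / 2) :
    ∫ x in I, -u x * exp (-u x) ∂μ ≤ (1 + 4 * (∫ x, |x - a| * exp |x - a| ∂μ) / κ) * η := by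
  set D := ∫ x, |x - a| * exp |x - a| ∂μ
  set M := ∫ x in I, (x - a) * exp (-u x) ∂μ
  have hs_le := abs_subgradient_le hexp hI hu hs hmass hleft hη hua hκ hκl hκr hηκ
  have hκ1 : κ ≤ 1 := hκr.trans measureReal_le_one
  have hs1 : |s| ≤ 1 := hs_le.trans ((div_le_one hκ).2 (by linarith))
  have hM : |M| ≤ 2 * D :=
    (abs_setIntegral_sub_mul_exp_neg_le hexp hI hs hs1).trans
      (mul_le_mul_of_nonneg_right (by linarith) (integral_nonneg fun x => by positivity))
  have hlin : ∫ x in I, (-u a - s * (x - a)) * exp (-u x) ∂μ = -u a - s * M := by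
    calc ∫ x in I, (-u a - s * (x - a)) * exp (-u x) ∂μ
        = ∫ x in I, (-u a * exp (-u x) - s * ((x - a) * exp (-u x))) ∂μ := by
          congr 1 with x; ring
      _ = -u a - s * M := by
          rw [integral_sub ((integrableOn_exp_neg_of_subgradient hexp hI hu hs).const_mul _)
            ((integrableOn_sub_mul_exp_neg hexp hI hu hs hs1).const_mul _), integral_const_mul,
            integral_const_mul, hmass, mul_one]
  calc ∫ x in I, -u x * exp (-u x) ∂μ ≤ ∫ x in I, (-u a - s * (x - a)) * exp (-u x) ∂μ :=
        setIntegral_mono_on (integrableOn_neg_mul_exp_neg hexp hI hu hs hs1)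
          (integrableOn_affine_mul_exp_neg hexp hI hu hs hs1) hI
          fun _ hx => neg_mul_exp_neg_le_of_subgradient hs hx
    _ = -u a - s * M := hlin
    _ ≤ η + |s| * |M| := by
        linarith [neg_abs_le (s * M), abs_mul s M, add_one_le_exp (-u a)]
    _ ≤ η + 2 * η / κ * (2 * D) := by gcongr
    _ = (1 + 4 * D / κ) * η := by ring

end Subgradient

lemma withDensity_indicator_ofReal_apply {α : Type*} [MeasurableSpace α] {μ : Measure α}
    {I S : Set α} {f : α → ℝ} (hI : MeasurableSet I) (hS : MeasurableSet S)
    (hf : IntegrableOn f I μ) (hf0 : 0 ≤ f) :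
    μ.withDensity (I.indicator fun x => ENNReal.ofReal (f x)) S
      = ENNReal.ofReal (∫ x in I ∩ S, f x ∂μ) := by
  rw [withDensity_apply _ hS, setLIntegral_indicator hI, ofReal_integral_eq_lintegral_ofReal
    (hf.mono_set inter_subset_left) (ae_of_all _ hf0)]

lemma setIntegral_eq_one_of_isProbabilityMeasure_withDensity {α : Type*} [MeasurableSpace α]
    {μ : Measure α} {I : Set α} {f : α → ℝ} (hI : MeasurableSet I) (hf : IntegrableOn f I μ)
    (hf0 : 0 ≤ f) (hm : IsProbabilityMeasure (μ.withDensity (I.indicator fun x =>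
      ENNReal.ofReal (f x)))) :
    ∫ x in I, f x ∂μ = 1 := by
  have h := hm.measure_univ
  rwa [withDensity_indicator_ofReal_apply hI MeasurableSet.univ hf hf0, inter_univ,
    ENNReal.ofReal_eq_one] at h

lemma setIntegral_inter_eq_of_withDensity_apply {α : Type*} [MeasurableSpace α]
    {μ : Measure α} {I S : Set α} {f : α → ℝ} {θ : ℝ} (hI : MeasurableSet I)
    (hS : MeasurableSet S) (hf : IntegrableOn f I μ) (hf0 : 0 ≤ f) (hθ : 0 ≤ θ)
    (h : μ.withDensity (I.indicator fun x => ENNReal.ofReal (f x)) (S ∩ I) = ENNReal.ofReal θ) :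
    ∫ x in S ∩ I, f x ∂μ = θ := by
  rwa [withDensity_indicator_ofReal_apply hI (hS.inter hI) hf hf0,
    inter_eq_right.2 inter_subset_right,
    ENNReal.ofReal_eq_ofReal_iff (setIntegral_nonneg (hS.inter hI) fun x _ => hf0 x) hθ] at h

lemma volume_withDensity_indicator_eq_gauss_withDensity (I : Set ℝ) (ψ : ℝ → ℝ) :
    volume.withDensity (I.indicator fun x => ENNReal.ofReal (exp (-ψ x)))
      = gauss.withDensity (I.indicator fun x => ENNReal.ofReal (exp (-(ψ x - gaussPsi x)))) := by
  ext S hS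
  rw [withDensity_apply' _ S, withDensity_apply' _ S, gauss,
    setLIntegral_withDensity_eq_setLIntegral_mul_non_measurable _ (by fun_prop) _ hS
      (ae_of_all _ fun _ => ENNReal.ofReal_lt_top)]
  congr with x
  by_cases hx : x ∈ I
  · simp only [Pi.mul_apply, indicator_of_mem hx, ← ENNReal.ofReal_mul (exp_pos _).le, ← exp_add]
    ring_nf
  · simp [indicator_of_notMem hx]

lemma exp_neg_sub_gaussPsi_le {ψ : ℝ → ℝ} {a δ : ℝ}
    (h : exp (-ψ a) ≤ exp (-gaussPsi a) + δ) :
    exp (-(ψ a - gaussPsi a)) ≤ 1 + exp (gaussPsi a) * δ :=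
  calc exp (-(ψ a - gaussPsi a)) = exp (gaussPsi a) * exp (-ψ a) := by
        rw [← exp_add, neg_sub, sub_eq_add_neg]
    _ ≤ exp (gaussPsi a) * (exp (-gaussPsi a) + δ) := by gcongr
    _ = 1 + exp (gaussPsi a) * δ := by rw [mul_add, ← exp_add, add_neg_cancel, exp_zero]

/-- the relative-entropy (`Ent_γ(m)`) estimate on an interval. -/
theorem entropy_estimate_on_interval (θ : ℝ) (hθ : θ ∈ Ioo (0:ℝ) 1) :
    ∃ C : ℝ, 0 < C ∧ ∃ δ₀ : ℝ, 0 < δ₀ ∧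
      ∀ (δ : ℝ), 0 < δ → δ ≤ δ₀ →
      ∀ (I : Set ℝ) (ψ : ℝ → ℝ) (a : ℝ),
        IsOpen I → Convex ℝ I → a ∈ I →
        gauss (Iic a) = ENNReal.ofReal θ →
        (∀ x ∈ I, ∀ y ∈ I, ∀ t ∈ Ioo (0:ℝ) 1,
          ψ ((1 - t) * x + t * y)
            ≤ (1 - t) * ψ x + t * ψ y - (1 / 2) * (1 - t) * t * |x - y| ^ 2) →
        IsProbabilityMeasure
          (MeasureTheory.volume.withDensity
            (I.indicator fun x => ENNReal.ofReal (Real.exp (-ψ x)))) →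
        (MeasureTheory.volume.withDensity
            (I.indicator fun x => ENNReal.ofReal (Real.exp (-ψ x)))) (Iic a ∩ I)
          = ENNReal.ofReal θ →
        Real.exp (-ψ a) ≤ Real.exp (-gaussPsi a) + δ →
        (∫ x in I, (gaussPsi x - ψ x) * Real.exp (gaussPsi x - ψ x) ∂gauss) ≤ C * δ := by
  by_cases hquantile : ∃ a₀, gauss (Iic a₀) = ENNReal.ofReal θ
  swap
  · exact ⟨1, one_pos, 1, one_pos, fun _ _ _ _ _ a _ _ _ ha => absurd ⟨a, ha⟩ hquantile⟩
  obtain ⟨a₀, ha₀⟩ := hquantile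
  set c := exp (gaussPsi a₀)
  set κ := min (gauss.real (Iic (a₀ - 1))) (gauss.real (Ioi (a₀ + 1)))
  set D := ∫ x, |x - a₀| * exp |x - a₀| ∂gauss
  have hκ : 0 < κ := lt_min (measureReal_gauss_pos (by simp)) (measureReal_gauss_pos (by simp))
  refine ⟨(1 + 4 * D / κ) * c, by positivity, κ / (2 * c), by positivity, ?_⟩
  intro δ hδ hδ₀ I ψ a hI hIc haI ha hψ hm hmθ hdef
  obtain rfl : a = a₀ := gauss_Iic_injective (ha.trans ha₀.symm)
  set u : ℝ → ℝ := fun x => ψ x - gaussPsi x with hu_def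
  have hu : ConvexOn ℝ I u := (strongConvexOn_of_forall_mem_Ioo hIc hψ).convexOn_sub_gaussPsi
  have hs : ∀ x ∈ I, u a + derivWithin u (Ioi a) a * (x - a) ≤ u x := fun x hx =>
    hu.add_rightDeriv_mul_sub_le (hI.interior_eq.symm ▸ haI) hx
  have hu_meas := (hu.continuousOn hI).aestronglyMeasurable (μ := gauss) hI.measurableSet
  have hf := integrableOn_exp_neg_of_subgradient integrable_exp_mul_gauss hI.measurableSet
    hu_meas hs
  have hf0 : 0 ≤ fun x => exp (-u x) := fun x => (exp_pos _).le
  rw [volume_withDensity_indicator_eq_gauss_withDensity] at hm hmθ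
  have hleft : ∫ x in Iic a ∩ I, exp (-u x) ∂gauss = gauss.real (Iic a) := by
    rw [setIntegral_inter_eq_of_withDensity_apply hI.measurableSet measurableSet_Iic hf hf0
      hθ.1.le hmθ, measureReal_def, ha, ENNReal.toReal_ofReal hθ.1.le]
  have hmass := setIntegral_eq_one_of_isProbabilityMeasure_withDensity hI.measurableSet hf hf0 hm
  have key := setIntegral_neg_mul_exp_neg_le_of_subgradient integrable_exp_mul_gauss
    hI.measurableSet hu_meas hs hmass hleft (by positivity) (exp_neg_sub_gaussPsi_le hdef) hκ (min_le_left ..) (min_le_right ..)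
    (by rw [le_div_iff₀ (by positivity)] at hδ₀; linarith)
  simp only [hu_def, neg_sub] at key
  exact key.trans_eq (mul_assoc ..).symm
end

section
/- For every a ∈ ℝ and every c ≥ 0, ∫_ℝ exp(−x²/2 + c·|x − a|) dx ≤ exp(c²/2 + c·|a|) · (√(2π) + 2c). -/
open MeasureTheory Real Set

lemma gaussian_std_integrable : Integrable (fun u : ℝ => Real.exp (-u ^ 2 / 2)) := by
  have := integrable_exp_neg_mul_sq (show (0:ℝ) < 1/2 by norm_num)
  convert this using 2 with u; ring_nf

lemma gaussian_tilt_integrable (c : ℝ) :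
    Integrable (fun x : ℝ => Real.exp (-x ^ 2 / 2 + c * |x|)) := by
  have hg : Integrable (fun x : ℝ => Real.exp (c ^ 2) * Real.exp (-(1/4) * x ^ 2)) :=
    (integrable_exp_neg_mul_sq (by norm_num : (0:ℝ) < 1/4)).const_mul _
  refine hg.mono' ?_ (Filter.Eventually.of_forall fun x => ?_)
  · exact (Continuous.aestronglyMeasurable (by continuity))
  · rw [Real.norm_eq_abs, abs_of_nonneg (Real.exp_nonneg _), ← Real.exp_add]
    apply Real.exp_le_exp.mpr
    nlinarith [sq_nonneg (|x|/2 - c), sq_abs x, abs_nonneg x]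

lemma gaussian_tilt_halfline (c : ℝ) (hc : 0 ≤ c) :
    (∫ x in Ioi (0:ℝ), Real.exp (-x ^ 2 / 2 + c * x))
      ≤ Real.exp (c ^ 2 / 2) * (c + Real.sqrt (2 * π) / 2) := by
  have h1 := gaussian_std_integrable
  have hsplit : (∫ x in Ioi (0:ℝ), Real.exp (-x ^ 2 / 2 + c * x))
      = Real.exp (c ^ 2 / 2) * ∫ x in Ioi (0:ℝ), Real.exp (-(x - c) ^ 2 / 2) := by
    rw [← integral_const_mul]
    refine setIntegral_congr_fun measurableSet_Ioi fun x _ => ?_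
    rw [← Real.exp_add]; ring_nf
  rw [hsplit]
  have hshift : (∫ x in Ioi (0:ℝ), Real.exp (-(x - c) ^ 2 / 2))
      = ∫ u in Ioi (-c), Real.exp (-u ^ 2 / 2) := by
    have hmp : MeasurePreserving (fun x : ℝ => x - c) volume volume :=
      measurePreserving_sub_right volume c
    have hemb : MeasurableEmbedding (fun x : ℝ => x - c) :=
      (Homeomorph.subRight c).measurableEmbedding
    have h := hmp.setIntegral_preimage_emb hemb (fun u => Real.exp (-u ^ 2 / 2)) (Ioi (-c))
    have hset : (fun x : ℝ => x - c) ⁻¹' Ioi (-c) = Ioi 0 := by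
      ext x
      simp only [mem_preimage, mem_Ioi]
      constructor <;> intro hx <;> linarith
    rw [hset] at h
    exact h
  rw [hshift]
  have hunion : (∫ u in Ioi (-c), Real.exp (-u ^ 2 / 2))
      = (∫ u in Ioc (-c) 0, Real.exp (-u ^ 2 / 2)) + ∫ u in Ioi (0:ℝ), Real.exp (-u ^ 2 / 2) := by
    rw [← setIntegral_union (Ioc_disjoint_Ioi le_rfl) measurableSet_Ioi
      h1.integrableOn h1.integrableOn, Ioc_union_Ioi_eq_Ioi (by linarith : -c ≤ 0)]
  rw [hunion]
  have hb1 : (∫ u in Ioc (-c) 0, Real.exp (-u ^ 2 / 2)) ≤ c := by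
    calc (∫ u in Ioc (-c) 0, Real.exp (-u ^ 2 / 2))
        ≤ ∫ _ in Ioc (-c) 0, (1:ℝ) := by
          refine setIntegral_mono_on h1.integrableOn (integrable_const _)
            measurableSet_Ioc fun u _ => ?_
          simpa using Real.exp_le_one_iff.mpr (by nlinarith [sq_nonneg u] : -u^2/2 ≤ 0)
      _ = c := by
          simp [Real.volume_Ioc]
          linarith
  have hb2 : (∫ u in Ioi (0:ℝ), Real.exp (-u ^ 2 / 2)) = Real.sqrt (2 * π) / 2 := by
    have := integral_gaussian_Ioi (1/2)
    rw [show π / (1/2 : ℝ) = 2 * π by ring] at this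
    rw [← this]
    refine setIntegral_congr_fun measurableSet_Ioi fun u _ => ?_
    ring_nf
  rw [hb2]
  have := Real.exp_pos (c ^ 2 / 2)
  nlinarith [hb1]

/-- the Gaussian-type integral bound
`∫ exp(-x²/2 + c|x-a|) dx ≤ exp(c²/2 + c|a|)·(√(2π) + 2c)`. -/
theorem gaussian_tilt_integral_bound (a c : ℝ) (hc : 0 ≤ c) :
    (∫ x : ℝ, Real.exp (-x ^ 2 / 2 + c * |x - a|))
      ≤ Real.exp (c ^ 2 / 2 + c * |a|) * (Real.sqrt (2 * π) + 2 * c) := by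
  have hInt := gaussian_tilt_integrable c
  -- Step 1: pointwise bound by the symmetric integrand
  have step1 : (∫ x : ℝ, Real.exp (-x ^ 2 / 2 + c * |x - a|))
      ≤ Real.exp (c * |a|) * ∫ x : ℝ, Real.exp (-x ^ 2 / 2 + c * |x|) := by
    rw [← integral_const_mul]
    refine integral_mono_of_nonneg (Filter.Eventually.of_forall fun x => (Real.exp_nonneg _))
      (hInt.const_mul _) (Filter.Eventually.of_forall fun x => ?_)
    simp only []
    rw [← Real.exp_add]
    apply Real.exp_le_exp.mpr
    have habs : |x - a| ≤ |x| + |a| := abs_sub x a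
    nlinarith [mul_le_mul_of_nonneg_left habs hc]
  -- Step 2: symmetrize
  have step2 : (∫ x : ℝ, Real.exp (-x ^ 2 / 2 + c * |x|))
      = 2 * ∫ x in Ioi (0:ℝ), Real.exp (-x ^ 2 / 2 + c * x) := by
    have := integral_comp_abs (f := fun t : ℝ => Real.exp (-t ^ 2 / 2 + c * t))
    simp only [sq_abs] at this
    exact this
  have step3 := gaussian_tilt_halfline c hc
  have hpos : (0:ℝ) < Real.exp (c * |a|) := Real.exp_pos _
  calc (∫ x : ℝ, Real.exp (-x ^ 2 / 2 + c * |x - a|))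
      ≤ Real.exp (c * |a|) * ∫ x : ℝ, Real.exp (-x ^ 2 / 2 + c * |x|) := step1
    _ = Real.exp (c * |a|) * (2 * ∫ x in Ioi (0:ℝ), Real.exp (-x ^ 2 / 2 + c * x)) := by
        rw [step2]
    _ ≤ Real.exp (c * |a|) * (2 * (Real.exp (c ^ 2 / 2) * (c + Real.sqrt (2 * π) / 2))) := by
        have h2 : (2:ℝ) * ∫ x in Ioi (0:ℝ), Real.exp (-x ^ 2 / 2 + c * x)
            ≤ 2 * (Real.exp (c ^ 2 / 2) * (c + Real.sqrt (2 * π) / 2)) := by linarith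
        exact mul_le_mul_of_nonneg_left h2 hpos.le
    _ = Real.exp (c ^ 2 / 2 + c * |a|) * (Real.sqrt (2 * π) + 2 * c) := by
        rw [Real.exp_add]
        ring
end
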